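/- Under the Case 1 configuration of the banner-in-square setting, if v2' and v4' are distinct vertices of D with v2'v2 and v4'v4 edges of G, then v2'c and v4'd are edges of G. -/

import Mathlib

/-- The square of a graph `G`: two distinct vertices are adjacent in `G²` iff
their distance in `G` is 1 or 2. -/
def SimpleGraph.square {V : Type*} (G : SimpleGraph V) : SimpleGraph V where
  Adj u v := u ≠ v ∧ G.edist u v ≤ 2
  symm := ⟨fun u v ⟨h, hd⟩ => ⟨h.symm, by rwa [SimpleGraph.edist_comm]⟩⟩
  loopless := ⟨fun u ⟨h, _⟩ => h rfl⟩

/-- `D` is an efficient dominating set of `G`: `D` is an independent set and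
every vertex outside `D` has exactly one neighbor in `D`. -/
def SimpleGraph.IsEfficientDominatingSet {V : Type*} (G : SimpleGraph V) (D : Set V) : Prop :=
  (∀ u ∈ D, ∀ v ∈ D, ¬ G.Adj u v) ∧ ∀ v ∉ D, ∃! u, u ∈ D ∧ G.Adj v u

/-- The banner: a chordless 4-cycle 0-1-2-3-0 together with the vertex 4
adjacent to exactly one vertex (namely 0) of the cycle. -/
def banner : SimpleGraph (Fin 5) :=
  SimpleGraph.fromEdgeSet {s(0, 1), s(1, 2), s(2, 3), s(3, 0), s(0, 4)}

/-- `G` is `H`-free: no induced subgraph of `G` is isomorphic to `H`. -/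
def IsInducedFree {W V : Type*} (H : SimpleGraph W) (G : SimpleGraph V) : Prop :=
  IsEmpty (H ↪g G)


section Helpers
variable {V : Type*} {G : SimpleGraph V}

private lemma far_ne {x y : V} (h : 3 ≤ G.edist x y) : x ≠ y := by
  rintro rfl
  rw [SimpleGraph.edist_self] at h
  exact absurd h (by norm_num)

private lemma far_nadj {x y : V} (h : 3 ≤ G.edist x y) : ¬ G.Adj x y := by
  intro ha
  rw [← SimpleGraph.edist_eq_one_iff_adj] at ha
  rw [ha] at h
  exact absurd h (by norm_num)

private lemma far_common {x y z : V} (h : 3 ≤ G.edist x y) (h1 : G.Adj z x) (h2 : G.Adj z y) :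
    False := by
  have t : G.edist x y ≤ G.edist x z + G.edist z y := G.edist_triangle
  rw [← SimpleGraph.edist_eq_one_iff_adj] at h1 h2
  rw [SimpleGraph.edist_comm] at h1
  rw [h1, h2] at t
  have := h.trans t
  exact absurd this (by norm_num)

private lemma ne_of {x y w : V} (h1 : G.Adj x w) (h2 : ¬ G.Adj y w) : x ≠ y := by
  rintro rfl; exact h2 h1

private lemma eds_unique {D : Set V} (hD : G.IsEfficientDominatingSet D) {x y z : V}
    (hx : x ∈ D) (hy : y ∈ D) (hzx : G.Adj z x) (hzy : G.Adj z y) : x = y := by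
  have hz : z ∉ D := fun hz => hD.1 z hz x hx hzx
  obtain ⟨u, -, hu⟩ := hD.2 z hz
  rw [hu x ⟨hx, hzx⟩, hu y ⟨hy, hzy⟩]

private lemma no_banner (hB : IsInducedFree banner G) (x0 x1 x2 x3 x4 : V)
    (e01 : G.Adj x0 x1) (e12 : G.Adj x1 x2) (e23 : G.Adj x2 x3) (e30 : G.Adj x3 x0)
    (e04 : G.Adj x0 x4)
    (n02 : ¬G.Adj x0 x2) (n13 : ¬G.Adj x1 x3) (n14 : ¬G.Adj x1 x4) (n24 : ¬G.Adj x2 x4)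
    (n34 : ¬G.Adj x3 x4)
    (d02 : x0 ≠ x2) (d13 : x1 ≠ x3) (d14 : x1 ≠ x4) (d24 : x2 ≠ x4) (d34 : x3 ≠ x4) :
    False := by
  have d01 := e01.ne; have d12 := e12.ne; have d23 := e23.ne; have d03 := e30.ne.symm
  have d04 := e04.ne
  refine hB.elim ⟨⟨![x0,x1,x2,x3,x4], ?_⟩, ?_⟩
  · intro i j hij
    fin_cases i <;> fin_cases j <;>
      first | rfl | exact absurd hij (by assumption) | exact absurd hij.symm (by assumption)
  · intro i j
    fin_cases i <;> fin_cases j <;>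
      simp only [Function.Embedding.coeFn_mk, Matrix.cons_val', Matrix.cons_val_zero,
        Matrix.cons_val_one, Matrix.head_cons, Matrix.head_fin_const, Matrix.cons_val_fin_one] <;>
      first
      | exact iff_of_true (by assumption) (by simp [banner])
      | exact iff_of_true ((by assumption : G.Adj _ _).symm) (by simp [banner])
      | exact iff_of_false (by assumption) (by simp [banner])
      | exact iff_of_false (fun h => (by assumption : ¬ G.Adj _ _) h.symm) (by simp [banner])
      | exact iff_of_false (G.loopless.irrefl _) (by simp [banner])

set_option maxHeartbeats 1000000 in
private lemma no_P6 (hP : IsInducedFree (SimpleGraph.pathGraph 6) G) (x0 x1 x2 x3 x4 x5 : V)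
    (e01 : G.Adj x0 x1) (e12 : G.Adj x1 x2) (e23 : G.Adj x2 x3) (e34 : G.Adj x3 x4)
    (e45 : G.Adj x4 x5)
    (n02 : ¬G.Adj x0 x2) (n03 : ¬G.Adj x0 x3) (n04 : ¬G.Adj x0 x4) (n05 : ¬G.Adj x0 x5)
    (n13 : ¬G.Adj x1 x3) (n14 : ¬G.Adj x1 x4) (n15 : ¬G.Adj x1 x5)
    (n24 : ¬G.Adj x2 x4) (n25 : ¬G.Adj x2 x5) (n35 : ¬G.Adj x3 x5)
    (d02 : x0 ≠ x2) (d03 : x0 ≠ x3) (d04 : x0 ≠ x4) (d05 : x0 ≠ x5)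
    (d13 : x1 ≠ x3) (d14 : x1 ≠ x4) (d15 : x1 ≠ x5)
    (d24 : x2 ≠ x4) (d25 : x2 ≠ x5) (d35 : x3 ≠ x5) : False := by
  have d01 := e01.ne; have d12 := e12.ne; have d23 := e23.ne; have d34 := e34.ne
  have d45 := e45.ne
  refine hP.elim ⟨⟨![x0,x1,x2,x3,x4,x5], ?_⟩, ?_⟩
  · intro i j hij
    fin_cases i <;> fin_cases j <;>
      first | rfl | exact absurd hij (by assumption) | exact absurd hij.symm (by assumption)
  · intro i j
    fin_cases i <;> fin_cases j <;>
      simp only [Function.Embedding.coeFn_mk, Matrix.cons_val', Matrix.cons_val_zero,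
        Matrix.cons_val_one, Matrix.head_cons, Matrix.head_fin_const, Matrix.cons_val_fin_one] <;>
      first
      | exact iff_of_true (by assumption) (by simp only [SimpleGraph.pathGraph_adj] <;> decide)
      | exact iff_of_true ((by assumption : G.Adj _ _).symm) (by simp only [SimpleGraph.pathGraph_adj] <;> decide)
      | exact iff_of_false (by assumption) (by simp only [SimpleGraph.pathGraph_adj] <;> decide)
      | exact iff_of_false (fun h => (by assumption : ¬ G.Adj _ _) h.symm)
          (by simp only [SimpleGraph.pathGraph_adj] <;> decide)
      | exact iff_of_false (G.loopless.irrefl _) (by simp only [SimpleGraph.pathGraph_adj] <;> decide)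

end Helpers

theorem banner_case1_v2pc_v4pd {V : Type*} [Fintype V] (G : SimpleGraph V)
    (hP6 : IsInducedFree (SimpleGraph.pathGraph 6) G)
    (hBanner : IsInducedFree banner G)
    (D : Set V) (hD : G.IsEfficientDominatingSet D)
    (v1 v2 v3 v4 v5 : V)
    (h12 : G.edist v1 v2 ≤ 2) (h23 : G.edist v2 v3 ≤ 2) (h34 : G.edist v3 v4 ≤ 2)
    (h41 : G.edist v4 v1 ≤ 2) (h35 : G.edist v3 v5 ≤ 2)
    (h13 : 3 ≤ G.edist v1 v3) (h15 : 3 ≤ G.edist v1 v5) (h24 : 3 ≤ G.edist v2 v4)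
    (h25 : 3 ≤ G.edist v2 v5) (h45 : 3 ≤ G.edist v4 v5)
    (hv3v5 : G.Adj v3 v5)
    (a b c d : V)
    (hav2 : G.Adj a v2) (hav3 : G.Adj a v3) (hbv3 : G.Adj b v3) (hbv4 : G.Adj b v4)
    (hcv1 : G.Adj c v1) (hcv2 : G.Adj c v2) (hac : G.Adj a c) (hdv1 : G.Adj d v1)
    (hdv4 : G.Adj d v4) (hbd : G.Adj b d) (hcd : G.Adj c d) (hbc : G.Adj b c)
    (had : G.Adj a d) (hab : G.Adj a b)
    (v2' v4' : V) (hne : v2' ≠ v4') (hv2'D : v2' ∈ D) (hv4'D : v4' ∈ D)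
    (hv2'v2 : G.Adj v2' v2) (hv4'v4 : G.Adj v4' v4)
    : G.Adj v2' c ∧ G.Adj v4' d := by
  have nf13 : ¬ G.Adj v1 v3 := far_nadj h13
  have nf15 : ¬ G.Adj v1 v5 := far_nadj h15
  have nf24 : ¬ G.Adj v2 v4 := far_nadj h24
  have nf25 : ¬ G.Adj v2 v5 := far_nadj h25
  have nf45 : ¬ G.Adj v4 v5 := far_nadj h45
  have n_a_v1 : ¬ G.Adj a v1 := fun t => far_common h13 t hav3
  have n_b_v1 : ¬ G.Adj b v1 := fun t => far_common h13 t hbv3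
  have n_c_v3 : ¬ G.Adj c v3 := fun t => far_common h13 hcv1 t
  have n_d_v3 : ¬ G.Adj d v3 := fun t => far_common h13 hdv1 t
  have n_v3_v1 : ¬ G.Adj v3 v1 := fun t => far_common h15 t hv3v5
  have n_c_v5 : ¬ G.Adj c v5 := fun t => far_common h15 hcv1 t
  have n_d_v5 : ¬ G.Adj d v5 := fun t => far_common h15 hdv1 t
  have n_a_v4 : ¬ G.Adj a v4 := fun t => far_common h24 hav2 t
  have n_c_v4 : ¬ G.Adj c v4 := fun t => far_common h24 hcv2 t
  have n_p_v4 : ¬ G.Adj v2' v4 := fun t => far_common h24 hv2'v2 t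
  have n_b_v2 : ¬ G.Adj b v2 := fun t => far_common h24 t hbv4
  have n_d_v2 : ¬ G.Adj d v2 := fun t => far_common h24 t hdv4
  have n_q_v2 : ¬ G.Adj v4' v2 := fun t => far_common h24 t hv4'v4
  have n_a_v5 : ¬ G.Adj a v5 := fun t => far_common h25 hav2 t
  have n_p_v5 : ¬ G.Adj v2' v5 := fun t => far_common h25 hv2'v2 t
  have n_v3_v2 : ¬ G.Adj v3 v2 := fun t => far_common h25 t hv3v5
  have n_b_v5 : ¬ G.Adj b v5 := fun t => far_common h45 hbv4 t
  have n_q_v5 : ¬ G.Adj v4' v5 := fun t => far_common h45 hv4'v4 t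
  have n_v3_v4 : ¬ G.Adj v3 v4 := fun t => far_common h45 t hv3v5
  have hd_ne_q : d ≠ v4' := by
    intro hdq
    have hdD : d ∈ D := by rw [hdq]; exact hv4'D
    have hne' : v2' ≠ d := fun e => hne (e.trans hdq)
    have n_p_d : ¬ G.Adj v2' d := hD.1 v2' hv2'D d hdD
    have n_p_a : ¬ G.Adj v2' a := fun h => hne' (eds_unique hD hv2'D hdD h.symm had)
    have n_p_b : ¬ G.Adj v2' b := fun h => hne' (eds_unique hD hv2'D hdD h.symm hbd)
    have n_p_c : ¬ G.Adj v2' c := fun h => hne' (eds_unique hD hv2'D hdD h.symm hcd)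
    have n_p_v1 : ¬ G.Adj v2' v1 := fun h => hne' (eds_unique hD hv2'D hdD h.symm hdv1.symm)
    have n_v1_v2 : ¬ G.Adj v1 v2 := fun h =>
      no_P6 hP6 v2 v1 d b v3 v5 h.symm hdv1.symm hbd.symm hbv3 hv3v5 (fun t => n_d_v2 t.symm) (fun t => n_b_v2 t.symm) (fun t => n_v3_v2 t.symm) nf25 (fun t => n_b_v1 t.symm) nf13 nf15 n_d_v3 n_d_v5 n_b_v5 (ne_of hv2'v2.symm (fun t => n_p_d t.symm)) (ne_of hv2'v2.symm (fun t => n_p_b t.symm)) (ne_of hcv2.symm (fun t => n_c_v3 t.symm)) (far_ne h25) (ne_of hbv3 nf13).symm (far_ne h13) (far_ne h15) (ne_of hdv1 n_v3_v1) (ne_of hdv1 (fun t => nf15 t.symm)) (ne_of hbv4 (fun t => nf45 t.symm))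
    have n_v3_p : ¬ G.Adj v3 v2' := fun h =>
      no_P6 hP6 v1 c v2 v2' v3 v5 hcv1.symm hcv2 hv2'v2.symm h.symm hv3v5 n_v1_v2 (fun t => n_p_v1 t.symm) nf13 nf15 (fun t => n_p_c t.symm) n_c_v3 n_c_v5 (fun t => n_v3_v2 t.symm) nf25 n_p_v5 (ne_of hdv1.symm (fun t => n_d_v2 t.symm)) (ne_of hcv1.symm n_p_c) (far_ne h13) (far_ne h15) (ne_of hcv1 n_p_v1) (ne_of hcv1 n_v3_v1) (ne_of hcv1 (fun t => nf15 t.symm)) (ne_of hcv2.symm (fun t => n_c_v3 t.symm)) (far_ne h25) (ne_of hv2'v2 (fun t => nf25 t.symm))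
    exact no_P6 hP6 v5 v3 b c v2 v2' hv3v5.symm hbv3.symm hbc hcv2 hv2'v2.symm (fun t => n_b_v5 t.symm) (fun t => n_c_v5 t.symm) (fun t => nf25 t.symm) (fun t => n_p_v5 t.symm) (fun t => n_c_v3 t.symm) n_v3_v2 n_v3_p n_b_v2 (fun t => n_p_b t.symm) (fun t => n_p_c t.symm) (ne_of hbv4 (fun t => nf45 t.symm)).symm (ne_of hv3v5.symm n_c_v3) (far_ne h25).symm (ne_of hv3v5.symm (fun t => n_v3_p t.symm)) (ne_of hv3v5 n_c_v5) (ne_of hv3v5 nf25) (ne_of hv3v5 n_p_v5) (ne_of hbv3 (fun t => n_v3_v2 t.symm)) (ne_of hbv3 (fun t => n_v3_p t.symm)) (ne_of hcv1 n_p_v1)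
  have hqd : G.Adj v4' d := by
    by_contra nqd
    have n_a_q : ¬ G.Adj a v4' := fun h =>
      no_banner hBanner a d v4 v4' v2 had hdv4 hv4'v4.symm h.symm hav2 n_a_v4 (fun t => nqd t.symm) n_d_v2 (fun t => nf24 t.symm) n_q_v2 (ne_of hav2 (fun t => nf24 t.symm)) hd_ne_q (ne_of hdv4 nf24) (far_ne h24).symm (ne_of hv4'v4 nf24)
    have n_c_q : ¬ G.Adj c v4' := fun h =>
      no_banner hBanner c d v4 v4' v2 hcd hdv4 hv4'v4.symm h.symm hcv2 n_c_v4 (fun t => nqd t.symm) n_d_v2 (fun t => nf24 t.symm) n_q_v2 (ne_of hcv2 (fun t => nf24 t.symm)) hd_ne_q (ne_of hdv4 nf24) (far_ne h24).symm (ne_of hv4'v4 nf24)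
    have n_v3_q : ¬ G.Adj v3 v4' := fun h =>
      no_P6 hP6 v3 v4' v4 d c v2 h hv4'v4 hdv4.symm hcd.symm hcv2 n_v3_v4 (fun t => n_d_v3 t.symm) (fun t => n_c_v3 t.symm) n_v3_v2 nqd (fun t => n_c_q t.symm) n_q_v2 (fun t => n_c_v4 t.symm) (fun t => nf24 t.symm) n_d_v2 (ne_of hv3v5 nf45) (ne_of hv3v5 n_d_v5) (ne_of hv3v5 n_c_v5) (ne_of hv3v5 nf25) hd_ne_q.symm (ne_of hv4'v4 n_c_v4) (ne_of hv4'v4 nf24) (ne_of hv4'v4.symm n_c_q) (far_ne h24).symm (ne_of hdv4 nf24)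
    exact no_P6 hP6 v5 v3 a d v4 v4' hv3v5.symm hav3.symm had hdv4 hv4'v4.symm (fun t => n_a_v5 t.symm) (fun t => n_d_v5 t.symm) (fun t => nf45 t.symm) (fun t => n_q_v5 t.symm) (fun t => n_d_v3 t.symm) n_v3_v4 n_v3_q n_a_v4 n_a_q (fun t => nqd t.symm) (ne_of hav2 (fun t => nf25 t.symm)).symm (ne_of hv3v5.symm n_d_v3) (far_ne h45).symm (ne_of hv3v5.symm (fun t => n_v3_q t.symm)) (ne_of hv3v5 n_d_v5) (ne_of hv3v5 nf45) (ne_of hv3v5 n_q_v5) (ne_of hav2 (fun t => nf24 t.symm)) (ne_of hav2 n_q_v2) hd_ne_q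
  have hc_ne_p : c ≠ v2' := by
    intro hcp
    have hcD : c ∈ D := by rw [hcp]; exact hv2'D
    have : c = v4' := eds_unique hD hcD hv4'D hcd.symm hqd.symm
    exact (ne_of hcv2 n_q_v2) this
  refine ⟨?_, hqd⟩
  by_contra npc
  have n_b_p : ¬ G.Adj b v2' := fun h =>
    no_banner hBanner b c v2 v2' v4 hbc hcv2 hv2'v2.symm h.symm hbv4 n_b_v2 (fun t => npc t.symm) n_c_v4 nf24 n_p_v4 (ne_of hbv3 (fun t => n_v3_v2 t.symm)) hc_ne_p (ne_of hcv2 (fun t => nf24 t.symm)) (far_ne h24) (ne_of hv2'v2 (fun t => nf24 t.symm))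
  have n_d_p : ¬ G.Adj d v2' := fun h =>
    no_banner hBanner d c v2 v2' v4 hcd.symm hcv2 hv2'v2.symm h.symm hdv4 n_d_v2 (fun t => npc t.symm) n_c_v4 nf24 n_p_v4 (ne_of hdv4 nf24) hc_ne_p (ne_of hcv2 (fun t => nf24 t.symm)) (far_ne h24) (ne_of hv2'v2 (fun t => nf24 t.symm))
  have n_v3_p : ¬ G.Adj v3 v2' := fun h =>
    no_P6 hP6 v3 v2' v2 c d v4 h hv2'v2 hcv2.symm hcd hdv4 n_v3_v2 (fun t => n_c_v3 t.symm) (fun t => n_d_v3 t.symm) n_v3_v4 npc (fun t => n_d_p t.symm) n_p_v4 (fun t => n_d_v2 t.symm) nf24 n_c_v4 (ne_of hv3v5 nf25) (ne_of hv3v5 n_c_v5) (ne_of hv3v5 n_d_v5) (ne_of hv3v5 nf45) hc_ne_p.symm (ne_of hv2'v2 n_d_v2) (ne_of hv2'v2 (fun t => nf24 t.symm)) (ne_of hv2'v2.symm n_d_p) (far_ne h24) (ne_of hcv2 (fun t => nf24 t.symm))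
  exact absurd (no_P6 hP6 v5 v3 b c v2 v2' hv3v5.symm hbv3.symm hbc hcv2 hv2'v2.symm (fun t => n_b_v5 t.symm) (fun t => n_c_v5 t.symm) (fun t => nf25 t.symm) (fun t => n_p_v5 t.symm) (fun t => n_c_v3 t.symm) n_v3_v2 n_v3_p n_b_v2 n_b_p (fun t => npc t.symm) (ne_of hbv4 (fun t => nf45 t.symm)).symm (ne_of hv3v5.symm n_c_v3) (far_ne h25).symm (ne_of hv3v5.symm (fun t => n_v3_p t.symm)) (ne_of hv3v5 n_c_v5) (ne_of hv3v5 nf25) (ne_of hv3v5 n_p_v5) (ne_of hbv3 (fun t => n_v3_v2 t.symm)) (ne_of hbv3 (fun t => n_v3_p t.symm)) hc_ne_p) (fun f => f)
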